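/- arXiv:2508.01797 — 2 statements merged into one kernel-verified Lean document; each statement's English description precedes it below -/
import Mathlib

section
/- Let n ≥ 2. Consider the polynomial ring ℚ[a, b, z₁, …, z_{n−1}] and, with the convention z₀ = 1, the n + 1 polynomials g₁ = a + b + z₁, g_k = a·b·z_{k−2} + (a + b)·z_{k−1} + z_k for 2 ≤ k ≤ n − 1, g_n = a·b·z_{n−2} + (a + b)·z_{n−1}, and g_{n+1} = a·b·z_{n−1}. Then the quotient ℚ-algebra ℚ[a, b, z₁, …, z_{n−1}] / (g₁, …, g_{n+1}) is isomorphic, as a ℚ-algebra, to ℚ[a, b] / (h_n(a,b), a·b·h_{n−1}(a,b)), via the map induced by a ↦ a, b ↦ b, and z_k ↦ (−1)^k · h_k(a, b) for 1 ≤ k ≤ n − 1. (This is the algebraic content of the computation, via successive changes of variables and cancellation of acyclic ideals, of the rational cohomology algebra of U(n+1)/(U(1) × U(1) × U(n−1)).) -/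
open MvPolynomial

/-- The complete homogeneous polynomial `h_k(X, Y) = ∑_{i=0}^{k} X^{k-i} Y^i` in `ℚ[X, Y]`. -/
noncomputable def hpoly (k : ℕ) : MvPolynomial (Fin 2) ℚ :=
  ∑ i ∈ Finset.range (k + 1), X 0 ^ (k - i) * X 1 ^ i

/-! With `c(t) = (1 + a t)(1 + b t)`, the relations say that `c(t) · (1 + z₁ t + ⋯ + z_{n-1} t^{n-1})`
has no terms in degrees `1, …, n + 1`.  The first `n - 1` relations therefore determine
`z_k` recursively as the coefficient `(-1)^k h_k(a, b)` of `1 / c(t)`, because the signed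
complete homogeneous polynomials obey the same three-term recurrence; after this substitution
`g_n` and `g_{n+1}` become `-(-1)^n h_n` and `(-1)^(n-1) a b h_{n-1}`.  So eliminating the `z_k`
and including `ℚ[a, b]` are inverse to each other modulo the two ideals. -/

namespace Ideal

variable {R A B : Type*} [CommSemiring R] [CommRing A] [CommRing B] [Algebra R A] [Algebra R B]
  {I : Ideal A} {J : Ideal B}

noncomputable def quotientAlgEquivOfInverse (f : A →ₐ[R] B) (g : B →ₐ[R] A)
    (hf : I ≤ J.comap f) (hg : J ≤ I.comap g)
    (hfg : (Quotient.mkₐ R J).comp (f.comp g) = Quotient.mkₐ R J)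
    (hgf : (Quotient.mkₐ R I).comp (g.comp f) = Quotient.mkₐ R I) :
    (A ⧸ I) ≃ₐ[R] B ⧸ J :=
  AlgEquiv.ofAlgHom (quotientMapₐ J f hf) (quotientMapₐ I g hg)
    (Quotient.algHom_ext R hfg) (Quotient.algHom_ext R hgf)

theorem quotientAlgEquivOfInverse_mk (f : A →ₐ[R] B) (g : B →ₐ[R] A)
    (hf : I ≤ J.comap f) (hg : J ≤ I.comap g)
    (hfg : (Quotient.mkₐ R J).comp (f.comp g) = Quotient.mkₐ R J)
    (hgf : (Quotient.mkₐ R I).comp (g.comp f) = Quotient.mkₐ R I) (x : A) :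
    quotientAlgEquivOfInverse f g hf hg hfg hgf (Quotient.mk I x) = Quotient.mk J (f x) :=
  rfl

end Ideal

theorem eq_of_linear_recurrence {R : Type*} [CommRing R] (p q : R) {x y : ℕ → R} {N : ℕ}
    (hx : ∀ k, k + 2 ≤ N → q * x k + p * x (k + 1) + x (k + 2) = 0)
    (hy : ∀ k, k + 2 ≤ N → q * y k + p * y (k + 1) + y (k + 2) = 0)
    (h0 : x 0 = y 0) (h1 : x 1 = y 1) : ∀ k ≤ N, x k = y k
  | 0, _ => h0
  | 1, _ => h1
  | k + 2, hk => by
    have h := eq_of_linear_recurrence p q hx hy h0 h1 k (by omega)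
    have h' := eq_of_linear_recurrence p q hx hy h0 h1 (k + 1) (by omega)
    linear_combination hx k hk - hy k hk - q * h - p * h'

theorem hpoly_succ (k : ℕ) : hpoly (k + 1) = X 0 * hpoly k + X 1 ^ (k + 1) := by
  rw [hpoly, hpoly, Finset.sum_range_succ, Finset.mul_sum, Nat.sub_self, pow_zero, one_mul]
  congr 1
  refine Finset.sum_congr rfl fun i hi => ?_
  rw [show k + 1 - i = k - i + 1 by grind, pow_succ]
  ring

theorem hpoly_add_two (k : ℕ) :
    hpoly (k + 2) = (X 0 + X 1) * hpoly (k + 1) - X 0 * X 1 * hpoly k := by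
  linear_combination hpoly_succ (k + 1) - (X 1 : MvPolynomial (Fin 2) ℚ) * hpoly_succ k

noncomputable def signedHpoly (k : ℕ) : MvPolynomial (Fin 2) ℚ := (-1) ^ k * hpoly k

theorem C_neg_one_pow_mul_hpoly (k : ℕ) : C ((-1 : ℚ) ^ k) * hpoly k = signedHpoly k := by
  simp [signedHpoly]

theorem signedHpoly_zero : signedHpoly 0 = 1 := by simp [signedHpoly, hpoly]

theorem signedHpoly_one : signedHpoly 1 = -(X 0 + X 1) := by
  simp [signedHpoly, hpoly, Finset.sum_range_succ]

theorem signedHpoly_add_two (k : ℕ) :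
    X 0 * X 1 * signedHpoly k + (X 0 + X 1) * signedHpoly (k + 1) + signedHpoly (k + 2) = 0 := by
  unfold signedHpoly
  linear_combination (-1 : MvPolynomial (Fin 2) ℚ) ^ k * hpoly_add_two k

theorem signedHpoly_sub_two {j : ℕ} (hj : 2 ≤ j) :
    X 0 * X 1 * signedHpoly (j - 2) + (X 0 + X 1) * signedHpoly (j - 1) + signedHpoly j = 0 := by
  obtain ⟨i, rfl⟩ := Nat.exists_eq_add_of_le' hj
  exact signedHpoly_add_two i

theorem mul_signedHpoly_mem_iff {I : Ideal (MvPolynomial (Fin 2) ℚ)} (p : MvPolynomial (Fin 2) ℚ)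
    (k : ℕ) : p * signedHpoly k ∈ I ↔ p * hpoly k ∈ I := by
  rw [signedHpoly, mul_left_comm, Ideal.unit_mul_mem_iff_mem _ (isUnit_neg_one.pow k)]

section Presentation

variable (n : ℕ)

noncomputable def includeAB : MvPolynomial (Fin 2) ℚ →ₐ[ℚ] MvPolynomial (Fin (n + 1)) ℚ :=
  aeval ![X 0, X 1]

noncomputable def eliminateZ : MvPolynomial (Fin (n + 1)) ℚ →ₐ[ℚ] MvPolynomial (Fin 2) ℚ :=
  aeval fun i => if (i : ℕ) = 0 then X 0 else if (i : ℕ) = 1 then X 1 else signedHpoly (i - 1)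

@[simp] theorem includeAB_X_zero : includeAB n (X 0) = X 0 := by simp [includeAB]

@[simp] theorem includeAB_X_one : includeAB n (X 1) = X 1 := by simp [includeAB]

@[simp] theorem eliminateZ_X_zero : eliminateZ n (X 0) = X 0 := by simp [eliminateZ]

theorem eliminateZ_X_one (hn : 1 ≤ n) : eliminateZ n (X 1) = X 1 := by
  simp [eliminateZ, show n ≠ 0 by omega]

theorem eliminateZ_X_succ {k : ℕ} (hk : 1 ≤ k) (h : k + 1 < n + 1) :
    eliminateZ n (X ⟨k + 1, h⟩) = signedHpoly k := by
  simp [eliminateZ, show k ≠ 0 by omega]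

theorem eliminateZ_comp_includeAB (hn : 1 ≤ n) :
    (eliminateZ n).comp (includeAB n) = AlgHom.id ℚ _ := by
  ext i
  fin_cases i <;> simp [eliminateZ_X_one n hn]

theorem eliminateZ_apply_z (z : ℕ → MvPolynomial (Fin (n + 1)) ℚ) (hz0 : z 0 = 1)
    (hz : ∀ k : ℕ, 1 ≤ k → k ≤ n - 1 → ∀ hk : k + 1 < n + 1, z k = X ⟨k + 1, hk⟩)
    {k : ℕ} (hk : k ≤ n - 1) : eliminateZ n (z k) = signedHpoly k := by
  rcases Nat.eq_zero_or_pos k with rfl | hk0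
  · rw [hz0, map_one, signedHpoly_zero]
  · rw [hz k hk0 hk (by omega), eliminateZ_X_succ n hk0]

theorem span_relations_le_comap_eliminateZ (hn : 2 ≤ n)
    (z : ℕ → MvPolynomial (Fin (n + 1)) ℚ) (hz0 : z 0 = 1)
    (hz : ∀ k : ℕ, 1 ≤ k → k ≤ n - 1 → ∀ hk : k + 1 < n + 1, z k = X ⟨k + 1, hk⟩)
    (g : ℕ → MvPolynomial (Fin (n + 1)) ℚ) (hg1 : g 1 = X 0 + X 1 + z 1)
    (hgk : ∀ k : ℕ, 2 ≤ k → k ≤ n - 1 →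
      g k = X 0 * X 1 * z (k - 2) + (X 0 + X 1) * z (k - 1) + z k)
    (hgn : g n = X 0 * X 1 * z (n - 2) + (X 0 + X 1) * z (n - 1))
    (hgn1 : g (n + 1) = X 0 * X 1 * z (n - 1)) :
    Ideal.span (g '' Set.Icc 1 (n + 1)) ≤
      (Ideal.span {hpoly n, (X 0 : MvPolynomial (Fin 2) ℚ) * X 1 * hpoly (n - 1)}).comap
        (eliminateZ n) := by
  have helim {k : ℕ} (hk : k ≤ n - 1) := eliminateZ_apply_z n z hz0 hz hk
  simp only [Ideal.span_le, Set.image_subset_iff]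
  intro j ⟨hj1, hjn⟩
  simp only [Set.mem_preimage, SetLike.mem_coe, Ideal.mem_comap]
  rcases (by omega : j = 1 ∨ (2 ≤ j ∧ j ≤ n - 1) ∨ n = j ∨ n + 1 = j) with
    rfl | ⟨hj2, hj⟩ | rfl | rfl
  · simp [hg1, eliminateZ_X_one n (by omega), helim (show 1 ≤ n - 1 by omega), signedHpoly_one]
  · rw [hgk j hj2 hj]
    simp only [map_add, map_mul, eliminateZ_X_zero, eliminateZ_X_one n (by omega), helim hj,
      helim (show j - 1 ≤ n - 1 by omega), helim (show j - 2 ≤ n - 1 by omega)]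
    rw [signedHpoly_sub_two hj2]
    exact Ideal.zero_mem _
  · rw [hgn]
    simp only [map_add, map_mul, eliminateZ_X_zero, eliminateZ_X_one n (by omega),
      helim le_rfl, helim (show n - 2 ≤ n - 1 by omega)]
    rw [show X 0 * X 1 * signedHpoly (n - 2) + (X 0 + X 1) * signedHpoly (n - 1) =
      -1 * signedHpoly n by linear_combination signedHpoly_sub_two hn, mul_signedHpoly_mem_iff]
    exact Ideal.mul_mem_left _ _ (Ideal.subset_span (by simp))
  · rw [hgn1]
    simp only [map_mul, eliminateZ_X_zero, eliminateZ_X_one n (by omega), helim le_rfl,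
      mul_signedHpoly_mem_iff]
    exact Ideal.subset_span (by simp)

theorem mk_z_eq_mk_includeAB (z : ℕ → MvPolynomial (Fin (n + 1)) ℚ) (hz0 : z 0 = 1)
    (g : ℕ → MvPolynomial (Fin (n + 1)) ℚ) (hg1 : g 1 = X 0 + X 1 + z 1)
    (hgk : ∀ k : ℕ, 2 ≤ k → k ≤ n - 1 →
      g k = X 0 * X 1 * z (k - 2) + (X 0 + X 1) * z (k - 1) + z k)
    {k : ℕ} (hk : k ≤ n - 1) :
    Ideal.Quotient.mk (Ideal.span (g '' Set.Icc 1 (n + 1))) (z k) =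
      Ideal.Quotient.mk _ (includeAB n (signedHpoly k)) := by
  set I := Ideal.span (g '' Set.Icc 1 (n + 1))
  have hg {j : ℕ} (h1 : 1 ≤ j) (h2 : j ≤ n + 1) : Ideal.Quotient.mk I (g j) = 0 :=
    Ideal.Quotient.eq_zero_iff_mem.2 (Ideal.subset_span ⟨j, ⟨h1, h2⟩, rfl⟩)
  refine eq_of_linear_recurrence (Ideal.Quotient.mk I (X 0 + X 1))
    (Ideal.Quotient.mk I (X 0 * X 1)) (x := fun j => Ideal.Quotient.mk I (z j))
    (y := fun j => Ideal.Quotient.mk I (includeAB n (signedHpoly j)))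
    (fun j hj => ?_) (fun j _ => ?_) ?_ ?_ k hk
  · have := hg (j := j + 2) (by omega) (by omega)
    rw [hgk (j + 2) (by omega) hj] at this
    simpa only [map_add, map_mul, Nat.add_sub_cancel, show j + 2 - 1 = j + 1 from rfl] using this
  · simpa only [map_add, map_mul, map_zero, includeAB_X_zero, includeAB_X_one] using
      congrArg (fun p => Ideal.Quotient.mk I (includeAB n p)) (signedHpoly_add_two j)
  · simp [hz0, signedHpoly_zero]
  · have := hg (j := 1) le_rfl (by omega)
    rw [hg1, map_add, map_add] at this
    simp only [signedHpoly_one, map_neg, map_add, includeAB_X_zero, includeAB_X_one]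
    linear_combination this

theorem span_hpoly_le_comap_includeAB (hn : 2 ≤ n)
    (z : ℕ → MvPolynomial (Fin (n + 1)) ℚ) (hz0 : z 0 = 1)
    (g : ℕ → MvPolynomial (Fin (n + 1)) ℚ) (hg1 : g 1 = X 0 + X 1 + z 1)
    (hgk : ∀ k : ℕ, 2 ≤ k → k ≤ n - 1 →
      g k = X 0 * X 1 * z (k - 2) + (X 0 + X 1) * z (k - 1) + z k)
    (hgn : g n = X 0 * X 1 * z (n - 2) + (X 0 + X 1) * z (n - 1))
    (hgn1 : g (n + 1) = X 0 * X 1 * z (n - 1)) :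
    Ideal.span {hpoly n, (X 0 : MvPolynomial (Fin 2) ℚ) * X 1 * hpoly (n - 1)} ≤
      (Ideal.span (g '' Set.Icc 1 (n + 1))).comap (includeAB n) := by
  have hz {k : ℕ} (hk : k ≤ n - 1) := mk_z_eq_mk_includeAB n z hz0 g hg1 hgk hk
  set I := Ideal.span (g '' Set.Icc 1 (n + 1))
  have hg {j : ℕ} (h1 : 1 ≤ j) (h2 : j ≤ n + 1) : Ideal.Quotient.mk I (g j) = 0 :=
    Ideal.Quotient.eq_zero_iff_mem.2 (Ideal.subset_span ⟨j, ⟨h1, h2⟩, rfl⟩)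
  rw [Ideal.span_le, Set.insert_subset_iff, Set.singleton_subset_iff, SetLike.mem_coe,
    SetLike.mem_coe, ← one_mul (hpoly n), ← mul_signedHpoly_mem_iff, ← mul_signedHpoly_mem_iff,
    Ideal.mem_comap, Ideal.mem_comap, ← Ideal.Quotient.eq_zero_iff_mem,
    ← Ideal.Quotient.eq_zero_iff_mem]
  simp only [map_mul, one_mul, includeAB_X_zero, includeAB_X_one]
  constructor
  · have hgn' := hg (j := n) (by omega) (by omega)
    rw [hgn] at hgn'
    simp only [map_add, map_mul, hz (show n - 2 ≤ n - 1 by omega), hz le_rfl] at hgn'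
    have hrec := congrArg (fun p => Ideal.Quotient.mk I (includeAB n p)) (signedHpoly_sub_two hn)
    simp only [map_add, map_mul, map_zero, includeAB_X_zero, includeAB_X_one] at hrec
    linear_combination hrec - hgn'
  · have hgn1' := hg (j := n + 1) (by omega) le_rfl
    rwa [hgn1, map_mul, map_mul, hz le_rfl] at hgn1'

theorem mkₐ_comp_includeAB_comp_eliminateZ (z : ℕ → MvPolynomial (Fin (n + 1)) ℚ) (hz0 : z 0 = 1)
    (hz : ∀ k : ℕ, 1 ≤ k → k ≤ n - 1 → ∀ hk : k + 1 < n + 1, z k = X ⟨k + 1, hk⟩)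
    (g : ℕ → MvPolynomial (Fin (n + 1)) ℚ) (hg1 : g 1 = X 0 + X 1 + z 1)
    (hgk : ∀ k : ℕ, 2 ≤ k → k ≤ n - 1 →
      g k = X 0 * X 1 * z (k - 2) + (X 0 + X 1) * z (k - 1) + z k) :
    (Ideal.Quotient.mkₐ ℚ (Ideal.span (g '' Set.Icc 1 (n + 1)))).comp
      ((includeAB n).comp (eliminateZ n)) = Ideal.Quotient.mkₐ ℚ _ := by
  ext ⟨_ | _ | k, hi⟩
  · simp [show (⟨0, hi⟩ : Fin (n + 1)) = 0 from rfl]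
  · rw [show (⟨1, hi⟩ : Fin (n + 1)) = 1 from Fin.ext (Nat.mod_eq_of_lt hi).symm]
    simp [eliminateZ_X_one n (by omega)]
  · simp only [AlgHom.comp_apply, Ideal.Quotient.mkₐ_eq_mk]
    rw [eliminateZ_X_succ n (k := k + 1) (by omega), ← hz (k + 1) (by omega) (by omega),
      mk_z_eq_mk_includeAB n z hz0 g hg1 hgk (by omega)]

end Presentation

/-- Let `n ≥ 2`.  In `ℚ[a, b, z₁, …, z_{n-1}]` (realized as `MvPolynomial (Fin (n+1)) ℚ`, with
`a = X 0`, `b = X 1`, and `z_k = X (k+1)` for `1 ≤ k ≤ n-1`, and the convention `z₀ = 1`),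
consider the polynomials
`g₁ = a + b + z₁`,
`g_k = a·b·z_{k-2} + (a+b)·z_{k-1} + z_k` for `2 ≤ k ≤ n-1`,
`g_n = a·b·z_{n-2} + (a+b)·z_{n-1}`, and
`g_{n+1} = a·b·z_{n-1}`.
Then the quotient `ℚ`-algebra `ℚ[a, b, z₁, …, z_{n-1}]/(g₁, …, g_{n+1})` is isomorphic, as a
`ℚ`-algebra, to `ℚ[a, b]/(h_n(a,b), a·b·h_{n-1}(a,b))`, via the map induced by `a ↦ a`,
`b ↦ b`, and `z_k ↦ (-1)^k · h_k(a, b)` for `1 ≤ k ≤ n-1`. -/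
theorem homogeneous_space_cohomology_presentation (n : ℕ) (hn : 2 ≤ n)
    (z : ℕ → MvPolynomial (Fin (n + 1)) ℚ)
    (hz0 : z 0 = 1)
    (hz : ∀ k : ℕ, 1 ≤ k → k ≤ n - 1 → ∀ hk : k + 1 < n + 1, z k = X ⟨k + 1, hk⟩)
    (g : ℕ → MvPolynomial (Fin (n + 1)) ℚ)
    (hg1 : g 1 = X 0 + X 1 + z 1)
    (hgk : ∀ k : ℕ, 2 ≤ k → k ≤ n - 1 →
      g k = X 0 * X 1 * z (k - 2) + (X 0 + X 1) * z (k - 1) + z k)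
    (hgn : g n = X 0 * X 1 * z (n - 2) + (X 0 + X 1) * z (n - 1))
    (hgn1 : g (n + 1) = X 0 * X 1 * z (n - 1)) :
    ∃ e : (MvPolynomial (Fin (n + 1)) ℚ ⧸ Ideal.span (g '' Set.Icc 1 (n + 1))) ≃ₐ[ℚ]
          (MvPolynomial (Fin 2) ℚ ⧸
            Ideal.span {hpoly n, (X 0 : MvPolynomial (Fin 2) ℚ) * X 1 * hpoly (n - 1)}),
      e (Ideal.Quotient.mk _ (X 0)) = Ideal.Quotient.mk _ (X 0) ∧
      e (Ideal.Quotient.mk _ (X 1)) = Ideal.Quotient.mk _ (X 1) ∧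
      ∀ k : ℕ, 1 ≤ k → k ≤ n - 1 →
        e (Ideal.Quotient.mk _ (z k)) =
          Ideal.Quotient.mk _ (C ((-1 : ℚ) ^ k) * hpoly k) := by
  refine ⟨Ideal.quotientAlgEquivOfInverse (eliminateZ n) (includeAB n)
    (span_relations_le_comap_eliminateZ n hn z hz0 hz g hg1 hgk hgn hgn1)
    (span_hpoly_le_comap_includeAB n hn z hz0 g hg1 hgk hgn hgn1)
    (by rw [eliminateZ_comp_includeAB n (by omega), AlgHom.comp_id])
    (mkₐ_comp_includeAB_comp_eliminateZ n z hz0 hz g hg1 hgk), ?_, ?_, fun k _ hk => ?_⟩ <;>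
    simp only [Ideal.quotientAlgEquivOfInverse_mk]
  · rw [eliminateZ_X_zero]
  · rw [eliminateZ_X_one n (by omega)]
  · rw [eliminateZ_apply_z n z hz0 hz hk, C_neg_one_pow_mul_hpoly]
end

section
/- Let n ≥ 2. The ℚ-algebra homomorphism ℚ[a, b] → ℚ[x, y] defined by a ↦ (−1)^{n+1}·x and b ↦ (−1)^{n+1}·y descends to a well-defined ℚ-algebra isomorphism ℚ[a, b] / ( (−1)^{n+1}·h_n(a, b), (−1)^{n+1}·a·b·h_{n−1}(a, b) ) ≅ ℚ[x, y] / ( h_n(x, y), y^{n+1} ). (This is the cohomology-level content of the theorem that the projectivization P(E) of the tangent bundle of ℂP^n has the rational homotopy type of U(n+1)/(U(1) × U(1) × U(n−1)): the left-hand side is H^*(U(n+1)/(U(1) × U(1) × U(n−1)); ℚ) and the right-hand side is H^*(P(E); ℚ).) -/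
/-!
Scaling all variables by a unit `c` is an automorphism of `R[X_i]` that multiplies a homogeneous
polynomial of degree `d` by `c ^ d`, so it maps every ideal generated by homogeneous polynomials
onto itself. Dropping the unit `(-1)^{n+1}` from the generators of the source ideal and using
`x y h_{n-1} = y h_n - y^{n+1}` shows that the source ideal already is `(h_n, y^{n+1})`.
-/

open MvPolynomial

namespace MvPolynomial

variable {R σ : Type*} [CommSemiring R]

theorem IsHomogeneous.aeval_C_mul_X {φ : MvPolynomial σ R} {d : ℕ} (hφ : φ.IsHomogeneous d)
    (c : R) : MvPolynomial.aeval (fun i => C c * X i) φ = C (c ^ d) * φ := by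
  conv_lhs => rw [φ.as_sum]
  conv_rhs => rw [φ.as_sum, Finset.mul_sum]
  rw [map_sum]
  refine Finset.sum_congr rfl fun s hs => ?_
  have hdeg : ∑ i ∈ s.support, s i = d := by
    simpa [Finsupp.weight_apply, Finsupp.sum] using hφ (mem_support_iff.mp hs)
  rw [aeval_monomial, monomial_eq, algebraMap_eq]
  simp only [mul_pow, Finsupp.prod_mul]
  rw [Finsupp.prod, Finset.prod_pow_eq_pow_sum, hdeg, C_pow]
  ring

noncomputable def scaleVars (u : Rˣ) : MvPolynomial σ R ≃ₐ[R] MvPolynomial σ R :=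
  AlgEquiv.ofAlgHom (aeval fun i => C (u : R) * X i) (aeval fun i => C (↑u⁻¹ : R) * X i)
    (algHom_ext fun i => by simp [← mul_assoc, ← C_mul])
    (algHom_ext fun i => by simp [← mul_assoc, ← C_mul])

theorem scaleVars_apply (u : Rˣ) (φ : MvPolynomial σ R) :
    scaleVars u φ = aeval (fun i => C (u : R) * X i) φ :=
  rfl

theorem map_scaleVars_span (u : Rˣ) {s : Set (MvPolynomial σ R)}
    (hs : ∀ p ∈ s, ∃ d, p.IsHomogeneous d) :
    (Ideal.span s).map (scaleVars (σ := σ) u : MvPolynomial σ R →+* MvPolynomial σ R) =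
      Ideal.span s := by
  rw [Ideal.map_span]
  apply le_antisymm <;> rw [Ideal.span_le]
  · rintro _ ⟨p, hp, rfl⟩
    obtain ⟨d, hd⟩ := hs p hp
    rw [SetLike.mem_coe, RingHom.coe_coe, scaleVars_apply, IsHomogeneous.aeval_C_mul_X hd]
    exact Ideal.mul_mem_left _ _ (Ideal.subset_span hp)
  · intro p hp
    obtain ⟨d, hd⟩ := hs p hp
    have hscale : p = C ((↑u⁻¹ : R) ^ d) * scaleVars u p := by
      rw [scaleVars_apply, IsHomogeneous.aeval_C_mul_X hd, ← mul_assoc, ← C_mul, ← mul_pow]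
      simp
    rw [SetLike.mem_coe, hscale]
    exact Ideal.mul_mem_left _ _ (Ideal.subset_span ⟨p, hp, rfl⟩)

end MvPolynomial

theorem isHomogeneous_hpoly (k : ℕ) : (hpoly k).IsHomogeneous k :=
  IsHomogeneous.sum _ _ _ fun i hi => by
    simpa [Nat.sub_add_cancel (Finset.mem_range_succ_iff.mp hi)] using
      (isHomogeneous_X_pow 0 (k - i)).mul (isHomogeneous_X_pow 1 i)

theorem span_hpoly_succ_X_mul_X_mul_hpoly (k : ℕ) :
    Ideal.span {hpoly (k + 1), X 0 * X 1 * hpoly k} =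
      Ideal.span {hpoly (k + 1), (X 1 : MvPolynomial (Fin 2) ℚ) ^ (k + 2)} := by
  have hX : X 0 * X 1 * hpoly k = -X 1 ^ (k + 2) + hpoly (k + 1) * X 1 := by
    rw [hpoly_succ]
    ring
  rw [hX, Ideal.span_pair_add_left_mul, Ideal.span_pair_neg]

/-- For `n ≥ 2`, the `ℚ`-algebra map `ℚ[a, b] → ℚ[x, y]`, `a ↦ (-1)^{n+1}·x`,
`b ↦ (-1)^{n+1}·y`, descends to a `ℚ`-algebra isomorphism
`ℚ[a, b]/((-1)^{n+1}·h_n(a,b), (-1)^{n+1}·a·b·h_{n-1}(a,b)) ≃ ℚ[x, y]/(h_n(x,y), y^{n+1})`. -/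
theorem quotient_algEquiv_of_sign_map (n : ℕ) (hn : 2 ≤ n) :
    ∃ e : (MvPolynomial (Fin 2) ℚ ⧸
            Ideal.span {C ((-1 : ℚ) ^ (n + 1)) * hpoly n,
              C ((-1 : ℚ) ^ (n + 1)) * (X 0 * X 1 * hpoly (n - 1))}) ≃ₐ[ℚ]
          (MvPolynomial (Fin 2) ℚ ⧸
            Ideal.span {hpoly n, (X 1 : MvPolynomial (Fin 2) ℚ) ^ (n + 1)}),
      ∀ p : MvPolynomial (Fin 2) ℚ,
        e (Ideal.Quotient.mk _ p) =
          Ideal.Quotient.mk _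
            (aeval ![C ((-1 : ℚ) ^ (n + 1)) * X 0, C ((-1 : ℚ) ^ (n + 1)) * X 1] p) := by
  obtain ⟨k, rfl⟩ : ∃ k, n = k + 1 := ⟨n - 1, by omega⟩
  have hsign : IsUnit ((-1 : ℚ) ^ (k + 2)) := isUnit_neg_one.pow _
  have hsource : Ideal.span {C ((-1 : ℚ) ^ (k + 2)) * hpoly (k + 1),
      C ((-1 : ℚ) ^ (k + 2)) * (X 0 * X 1 * hpoly k)} =
        Ideal.span {hpoly (k + 1), (X 1 : MvPolynomial (Fin 2) ℚ) ^ (k + 2)} := by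
    rw [Ideal.span_insert, Ideal.span_singleton_mul_left_unit (hsign.map C),
      Ideal.span_singleton_mul_left_unit (hsign.map C), ← Ideal.span_insert,
      span_hpoly_succ_X_mul_X_mul_hpoly]
  have hvars : (fun i => C ((-1 : ℚ) ^ (k + 2)) * X i) =
      ![C ((-1 : ℚ) ^ (k + 2)) * X 0, C ((-1 : ℚ) ^ (k + 2)) * X 1] := by
    funext i
    fin_cases i <;> rfl
  refine ⟨Ideal.quotientEquivAlg _ _ (scaleVars hsign.unit) ?_, fun p => ?_⟩
  · simp only [Nat.add_sub_cancel]
    rw [hsource, map_scaleVars_span]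
    rintro p (rfl | rfl)
    exacts [⟨_, isHomogeneous_hpoly _⟩, ⟨_, isHomogeneous_X_pow _ _⟩]
  · exact congrArg _ (congrArg (aeval · p) hvars)
end
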